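/- arXiv:2206.07553 — 4 statements merged into one kernel-verified Lean document; each statement's English description precedes it below -/
import Mathlib

section
/- Let 0 < ℓ < L and set √α = 2/(√L + √ℓ) (i.e. α = 4/(√L+√ℓ)²) and √β = α(L-ℓ)/4. Then √β = (√(L/ℓ) - 1)/(√(L/ℓ) + 1), β ∈ [0,1), and for every λ with ℓ < λ < L the strict inequalities (1-√β)²/λ < α < (1+√β)²/λ hold; equivalently (1+β-αλ)² - 4β < 0. -/
theorem hbm_optimal_parameters
    (L ℓ α β : ℝ) (hℓ : 0 < ℓ) (hℓL : ℓ < L)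
    (hα : α = 4 / (Real.sqrt L + Real.sqrt ℓ) ^ 2)
    (hβ : Real.sqrt β = α * (L - ℓ) / 4) (hβ0 : 0 ≤ β) :
    Real.sqrt β = (Real.sqrt (L / ℓ) - 1) / (Real.sqrt (L / ℓ) + 1) ∧
    0 ≤ β ∧ β < 1 ∧
    ∀ lam : ℝ, ℓ < lam → lam < L →
      ((1 - Real.sqrt β) ^ 2 / lam < α ∧ α < (1 + Real.sqrt β) ^ 2 / lam) ∧
      (1 + β - α * lam) ^ 2 - 4 * β < 0 := by
  have hL : (0:ℝ) < L := lt_trans hℓ hℓL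
  set s := Real.sqrt L with hs
  set t := Real.sqrt ℓ with ht
  have ht0 : 0 < t := Real.sqrt_pos.mpr hℓ
  have hs0 : 0 < s := Real.sqrt_pos.mpr hL
  have hts : t < s := Real.sqrt_lt_sqrt hℓ.le hℓL
  have hsL : s ^ 2 = L := Real.sq_sqrt hL.le
  have htl : t ^ 2 = ℓ := Real.sq_sqrt hℓ.le
  have hst0 : (0:ℝ) < (s + t) ^ 2 := by positivity
  have hb : Real.sqrt β = (s - t) / (s + t) := by
    rw [hβ, hα, ← hsL, ← htl]
    field_simp
    ring
  have hdiv : Real.sqrt (L / ℓ) = s / t := Real.sqrt_div' L hℓ.le ▸ Real.sqrt_div hL.le ℓ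
  have h1 : Real.sqrt (L / ℓ) = s / t := by
    rw [Real.sqrt_div hL.le]
  have hβval : β = ((s - t) / (s + t)) ^ 2 := by
    rw [← hb, Real.sq_sqrt hβ0]
  refine ⟨?_, hβ0, ?_, ?_⟩
  · rw [hb, h1]
    rw [div_eq_div_iff (by positivity) (by positivity)]
    field_simp
  · rw [hβval]
    rw [div_pow, div_lt_one hst0]
    nlinarith
  · intro lam hl1 hl2
    have hlam : 0 < lam := lt_trans hℓ hl1
    have hαval : α = 4 / (s + t) ^ 2 := hα
    have h1b : (1 - Real.sqrt β) ^ 2 = 4 * t ^ 2 / (s + t) ^ 2 := by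
      rw [hb]; field_simp; ring
    have h2b : (1 + Real.sqrt β) ^ 2 = 4 * s ^ 2 / (s + t) ^ 2 := by
      rw [hb]; field_simp; ring
    have hA : (1 - Real.sqrt β) ^ 2 / lam < α := by
      rw [h1b, hαval, htl, div_div, div_lt_div_iff₀ (by positivity) hst0]
      nlinarith
    have hB : α < (1 + Real.sqrt β) ^ 2 / lam := by
      rw [h2b, hαval, hsL, div_div, div_lt_div_iff₀ hst0 (by positivity)]
      nlinarith
    refine ⟨⟨hA, hB⟩, ?_⟩
    have hfac : (1 + β - α * lam) ^ 2 - 4 * β =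
        ((1 - Real.sqrt β) ^ 2 - α * lam) * ((1 + Real.sqrt β) ^ 2 - α * lam) := by
      have h2 : β = Real.sqrt β ^ 2 := (Real.sq_sqrt hβ0).symm
      set b := Real.sqrt β with hbdef
      rw [h2]; ring
    rw [hfac]
    have h1' : (1 - Real.sqrt β) ^ 2 - α * lam < 0 := by
      have := (div_lt_iff₀ hlam).mp hA; linarith
    have h2' : 0 < (1 + Real.sqrt β) ^ 2 - α * lam := by
      have := (lt_div_iff₀ hlam).mp hB; linarith
    exact mul_neg_of_neg_of_pos h1' h2'
end

section
/- Let 0 < ℓ < L, α = 4/(√L+√ℓ)², √β = α(L-ℓ)/4, and ℓ < λ < L with eigenvalues z^± = a ± ib (b ≠ 0) of T = [[1+β-αλ, -β],[1,0]]. Then ‖C‖_F² = 2β + 2 ≤ 4 where C = [[a+ib, a-ib],[1,1]], and ‖C⁻¹‖_F² = 2(1+β)/(4β - (1+β-αλ)²) ≤ 4/(α²(λ-ℓ)(L-λ)). -/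
/-!
The eigenvalues `z`, `conj z` of the heavy-ball block are the roots of
`X² - (1 + β - αλ) X + β`, so `1 + β - αλ = 2 Re z` and `β = |z|²`; hence `‖C‖_F² = 2|z|² + 2`.
For a `2 × 2` matrix the adjugate has the entries of the matrix up to sign and order, so
`‖C⁻¹‖_F² = ‖C‖_F² / |det C|²`, and `|det C|² = |z - conj z|² = 4 (Im z)²` is the negated
discriminant `4β - (1 + β - αλ)²`. For the tuned parameters `√β = (√L - √ℓ)/(√L + √ℓ) ≤ 1` and
`1 + β = α (L + ℓ) / 2`, so this discriminant factors as `α² (λ - ℓ) (L - λ)`.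
-/

open Complex Polynomial

/-- Squared Frobenius norm of a 2×2 complex matrix. -/
noncomputable def frobSq (M : Matrix (Fin 2) (Fin 2) ℂ) : ℝ :=
  ∑ i, ∑ j, ‖M i j‖ ^ 2

open scoped ComplexConjugate

lemma frobSq_eq (M : Matrix (Fin 2) (Fin 2) ℂ) :
    frobSq M = ‖M 0 0‖ ^ 2 + ‖M 0 1‖ ^ 2 + ‖M 1 0‖ ^ 2 + ‖M 1 1‖ ^ 2 := by
  simp only [frobSq, Fin.sum_univ_two]
  ring

lemma frobSq_smul (c : ℂ) (M : Matrix (Fin 2) (Fin 2) ℂ) :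
    frobSq (c • M) = ‖c‖ ^ 2 * frobSq M := by
  simp only [frobSq_eq, Matrix.smul_apply, smul_eq_mul, norm_mul]
  ring

lemma frobSq_adjugate (M : Matrix (Fin 2) (Fin 2) ℂ) : frobSq M.adjugate = frobSq M := by
  simp only [frobSq_eq, Matrix.adjugate_fin_two, Matrix.of_apply,
    Matrix.cons_val', Matrix.cons_val_zero, Matrix.cons_val_one, norm_neg]
  ring

lemma frobSq_inv (M : Matrix (Fin 2) (Fin 2) ℂ) : frobSq M⁻¹ = frobSq M / ‖M.det‖ ^ 2 := by
  rw [Matrix.inv_def, Ring.inverse_eq_inv', frobSq_smul, frobSq_adjugate, norm_inv, inv_pow,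
    inv_mul_eq_div]

lemma eq_two_re_and_normSq_of_quadratic_root {z : ℂ} {s p : ℝ} (hz : z.im ≠ 0)
    (h : z ^ 2 - s * z + p = 0) : s = 2 * z.re ∧ p = normSq z := by
  have hre := congrArg Complex.re h
  have him := congrArg Complex.im h
  simp only [sub_re, add_re, mul_re, ofReal_re, ofReal_im, pow_two, sub_im, add_im, mul_im,
    zero_re, zero_im] at hre him
  have hs : s = 2 * z.re := by
    refine (mul_left_cancel₀ hz ?_)
    linear_combination -him
  refine ⟨hs, ?_⟩
  rw [normSq_apply]
  linear_combination hre + z.re * hs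

/-- Its columns `(z, 1)`, `(conj z, 1)` are eigenvectors of the companion matrix of
`(X - z) (X - conj z)`. -/
def eigvecMatrix (z : ℂ) : Matrix (Fin 2) (Fin 2) ℂ :=
  !![z, conj z; 1, 1]

lemma frobSq_eigvecMatrix (z : ℂ) : frobSq (eigvecMatrix z) = 2 * normSq z + 2 := by
  simp only [eigvecMatrix, frobSq_eq, Matrix.of_apply, Matrix.cons_val', Matrix.cons_val_zero,
    Matrix.cons_val_fin_one, Matrix.cons_val_one, ← normSq_eq_norm_sq, RCLike.norm_conj, norm_one,
    one_pow]
  ring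

lemma norm_det_eigvecMatrix_sq (z : ℂ) : ‖(eigvecMatrix z).det‖ ^ 2 = 4 * z.im ^ 2 := by
  rw [eigvecMatrix, Matrix.det_fin_two_of, mul_one, mul_one, sub_conj, norm_mul, norm_I, mul_one,
    norm_real, Real.norm_eq_abs, sq_abs]
  ring

lemma heavyBall_sqrt_momentum_eq {L ℓ α : ℝ} (hℓ : 0 < ℓ) (hL : 0 ≤ L)
    (hα : α = 4 / (√L + √ℓ) ^ 2) : α * (L - ℓ) / 4 = (√L - √ℓ) / (√L + √ℓ) := by
  have hsum : 0 < √L + √ℓ := by positivity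
  rw [hα]
  field_simp
  linear_combination (Real.sq_sqrt hL).symm - (Real.sq_sqrt hℓ.le).symm

lemma heavyBall_momentum_le_one {L ℓ α β : ℝ} (hℓ : 0 < ℓ) (hL : 0 ≤ L)
    (hα : α = 4 / (√L + √ℓ) ^ 2) (hβ : β = (α * (L - ℓ) / 4) ^ 2) : β ≤ 1 := by
  rw [hβ, heavyBall_sqrt_momentum_eq hℓ hL hα, div_pow]
  exact div_le_one_of_le₀ (by nlinarith [Real.sqrt_nonneg L, Real.sqrt_nonneg ℓ]) (sq_nonneg _)

lemma heavyBall_one_add_momentum {L ℓ α β : ℝ} (hℓ : 0 < ℓ) (hL : 0 ≤ L)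
    (hα : α = 4 / (√L + √ℓ) ^ 2) (hβ : β = (α * (L - ℓ) / 4) ^ 2) :
    1 + β = α * (L + ℓ) / 2 := by
  have hsum : 0 < √L + √ℓ := by positivity
  rw [hβ, heavyBall_sqrt_momentum_eq hℓ hL hα, hα]
  field_simp
  linear_combination 4 * Real.sq_sqrt hL + 4 * Real.sq_sqrt hℓ.le

lemma heavyBall_discriminant {L ℓ α β : ℝ} (hℓ : 0 < ℓ) (hL : 0 ≤ L)
    (hα : α = 4 / (√L + √ℓ) ^ 2) (hβ : β = (α * (L - ℓ) / 4) ^ 2) (lam : ℝ) :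
    4 * β - (1 + β - α * lam) ^ 2 = α ^ 2 * (lam - ℓ) * (L - lam) := by
  rw [heavyBall_one_add_momentum hℓ hL hα hβ, hβ]
  ring

lemma isRoot_charpoly_companion_iff {s p : ℝ} {z : ℂ} :
    (!![(s : ℂ), ((-p : ℝ) : ℂ); 1, 0]).charpoly.IsRoot z ↔ z ^ 2 - s * z + p = 0 := by
  simp [Matrix.charpoly_fin_two, Matrix.trace_fin_two, Matrix.det_fin_two]

theorem hbm_eigvec_matrix_frobenius_bounds_general
    (L ℓ α β lam a b : ℝ) (hℓ : 0 < ℓ) (hℓL : ℓ < L)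
    (hα : α = 4 / (Real.sqrt L + Real.sqrt ℓ) ^ 2)
    (hβ : Real.sqrt β = α * (L - ℓ) / 4) (hβ0 : 0 ≤ β)
    (hb : b ≠ 0)
    (T C : Matrix (Fin 2) (Fin 2) ℂ)
    (hT : T = !![((1 + β - α * lam : ℝ) : ℂ), ((-β : ℝ) : ℂ); 1, 0])
    (hrootP : T.charpoly.IsRoot ((a : ℂ) + b * I))
    (hC : C = !![(a : ℂ) + b * I, (a : ℂ) - b * I; 1, 1]) :
    frobSq C = 2 * β + 2 ∧ 2 * β + 2 ≤ 4 ∧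
    frobSq C⁻¹ = 2 * (1 + β) / (4 * β - (1 + β - α * lam) ^ 2) ∧
    frobSq C⁻¹ ≤ 4 / (α ^ 2 * (lam - ℓ) * (L - lam)) := by
  have hL : 0 ≤ L := (hℓ.trans hℓL).le
  have hβsq : β = (α * (L - ℓ) / 4) ^ 2 := by rw [← hβ, Real.sq_sqrt hβ0]
  set z : ℂ := a + b * I with hz
  rw [hT, isRoot_charpoly_companion_iff] at hrootP
  obtain ⟨htr, hnorm⟩ := eq_two_re_and_normSq_of_quadratic_root (by simpa [hz] using hb) hrootP
  have hC' : C = eigvecMatrix z := by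
    rw [hC, eigvecMatrix, hz, map_add, map_mul, conj_ofReal, conj_ofReal, conj_I, mul_neg,
      ← sub_eq_add_neg]
  have hfC : frobSq C = 2 * β + 2 := by rw [hC', frobSq_eigvecMatrix, hnorm]
  have hdisc : α ^ 2 * (lam - ℓ) * (L - lam) = ‖C.det‖ ^ 2 := by
    rw [← heavyBall_discriminant hℓ hL hα hβsq, hC', norm_det_eigvecMatrix_sq, htr, hnorm,
      normSq_apply]
    ring
  have hfCi : frobSq C⁻¹ = (2 * β + 2) / (α ^ 2 * (lam - ℓ) * (L - lam)) := by
    rw [frobSq_inv, hfC, hdisc]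
  have hβ1 : β ≤ 1 := heavyBall_momentum_le_one hℓ hL hα hβsq
  refine ⟨hfC, by linarith, ?_, ?_⟩
  · rw [hfCi, heavyBall_discriminant hℓ hL hα hβsq]
    ring
  · rw [hfCi]
    exact div_le_div_of_nonneg_right (by linarith) (hdisc ▸ by positivity)

theorem hbm_eigvec_matrix_frobenius_bounds
    (L ℓ α β lam a b : ℝ) (hℓ : 0 < ℓ) (hℓL : ℓ < L)
    (hα : α = 4 / (Real.sqrt L + Real.sqrt ℓ) ^ 2)
    (hβ : Real.sqrt β = α * (L - ℓ) / 4) (hβ0 : 0 ≤ β)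
    (h1 : ℓ < lam) (h2 : lam < L) (hb : b ≠ 0)
    (T C : Matrix (Fin 2) (Fin 2) ℂ)
    (hT : T = !![((1 + β - α * lam : ℝ) : ℂ), ((-β : ℝ) : ℂ); 1, 0])
    (hrootP : T.charpoly.IsRoot ((a : ℂ) + b * I))
    (hrootM : T.charpoly.IsRoot ((a : ℂ) - b * I))
    (hC : C = !![(a : ℂ) + b * I, (a : ℂ) - b * I; 1, 1]) :
    frobSq C = 2 * β + 2 ∧ 2 * β + 2 ≤ 4 ∧
    frobSq C⁻¹ = 2 * (1 + β) / (4 * β - (1 + β - α * lam) ^ 2) ∧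
    frobSq C⁻¹ ≤ 4 / (α ^ 2 * (lam - ℓ) * (L - lam)) :=
  hbm_eigvec_matrix_frobenius_bounds_general L ℓ α β lam a b hℓ hℓL hα hβ hβ0 hb T C hT hrootP hC
end

section
/- With sampling probabilities satisfying η p_j ≥ ‖a_j‖²/‖A‖_F² (η ≥ 1), define for a random index j the matrix W_j = B⁻¹(-p_j⁻¹ a_j a_j^T + A^T A). Then E[W_j^T W_j] = B⁻²(Σᵢ (‖aᵢ‖²/pᵢ) aᵢaᵢ^T - (A^T A)²) and ‖E[W_j^T W_j]‖ ≤ η ‖A‖_F² ‖A‖² / B². -/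
/-!
Write `X_j = p_j⁻¹ a_j a_jᵀ`, so that `W_j = B⁻¹ (AᵀA - X_j)`. The sampling condition forces
`a_j = 0` whenever `p_j = 0`, so `X` is an unbiased estimator of `AᵀA`, and `B² E[W_jᵀ W_j]` is its
variance `E[X_jᵀ X_j] - (AᵀA)² = Σ (‖a_j‖² / p_j) a_j a_jᵀ - (AᵀA)²`. The sampling condition also
says that each coefficient `‖a_j‖² / p_j` is at most `η ‖A‖_F²`, so in the Loewner order
`0 ≤ B² E[W_jᵀ W_j] ≤ η ‖A‖_F² AᵀA`. The operator norm is monotone on positive semidefinite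
matrices (compare Rayleigh quotients), and `‖AᵀA‖ = ‖A‖²`.
-/

open Matrix
open scoped Matrix.Norms.L2Operator MatrixOrder

namespace ContinuousLinearMap

variable {𝕜 E : Type*} [RCLike 𝕜] [NormedAddCommGroup E] [InnerProductSpace 𝕜 E]

theorem IsPositive.rayleighQuotient_nonneg {T : E →L[𝕜] E} (hT : T.IsPositive) (x : E) :
    0 ≤ T.rayleighQuotient x :=
  div_nonneg (hT.re_inner_nonneg_left x) (sq_nonneg _)

theorem norm_le_norm_of_nonneg_of_le {P Q : E →L[𝕜] E} (hP : 0 ≤ P) (hPQ : P ≤ Q) :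
    ‖P‖ ≤ ‖Q‖ := by
  rw [nonneg_iff_isPositive] at hP
  rw [P.norm_eq_iSup_rayleighQuotient hP.isSymmetric]
  refine ciSup_le fun x => ?_
  calc |P.rayleighQuotient x| = P.rayleighQuotient x :=
        abs_of_nonneg (hP.rayleighQuotient_nonneg x)
    _ ≤ P.rayleighQuotient x + (Q - P).rayleighQuotient x :=
        le_add_of_nonneg_right (hPQ.rayleighQuotient_nonneg x)
    _ = Q.rayleighQuotient x := by rw [← rayleighQuotient_add, add_sub_cancel]
    _ ≤ ‖Q‖ := (le_abs_self _).trans (Q.rayleighQuotient_le_norm x)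

end ContinuousLinearMap

namespace Matrix

section L2OpNorm

variable {𝕜 m : Type*} [RCLike 𝕜] [Fintype m] [DecidableEq m]

theorem toEuclideanCLM_le_toEuclideanCLM_iff {P Q : Matrix m m 𝕜} :
    toEuclideanCLM (n := m) (𝕜 := 𝕜) P ≤ toEuclideanCLM (n := m) (𝕜 := 𝕜) Q ↔ P ≤ Q := by
  rw [ContinuousLinearMap.le_def, ← map_sub, ← ContinuousLinearMap.isPositive_toLinearMap_iff,
    coe_toEuclideanCLM_eq_toEuclideanLin, isPositive_toEuclideanLin_iff, le_iff]

theorem l2_opNorm_le_of_nonneg_of_le {P Q : Matrix m m 𝕜} (hP : 0 ≤ P) (hPQ : P ≤ Q) :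
    ‖P‖ ≤ ‖Q‖ := by
  rw [← l2_opNorm_toEuclideanCLM P, ← l2_opNorm_toEuclideanCLM Q]
  refine ContinuousLinearMap.norm_le_norm_of_nonneg_of_le ?_
    (toEuclideanCLM_le_toEuclideanCLM_iff.2 hPQ)
  rwa [← map_zero (toEuclideanCLM (n := m) (𝕜 := 𝕜)), toEuclideanCLM_le_toEuclideanCLM_iff]

theorem l2_opNorm_transpose_mul_self {n : Type*} [Fintype n] (A : Matrix n m ℝ) :
    ‖Aᵀ * A‖ = ‖A‖ ^ 2 := by
  rw [← conjTranspose_eq_transpose_of_trivial, l2_opNorm_conjTranspose_mul_self, sq]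

end L2OpNorm

variable {ι m n R K : Type*}

theorem transpose_mul_eq_sum_vecMulVec [Fintype ι] [NonUnitalNonAssocSemiring R]
    (A : Matrix ι m R) (B : Matrix ι n R) : Aᵀ * B = ∑ j, vecMulVec (A j) (B j) := by
  ext k l
  simp [mul_apply, sum_apply, vecMulVec_apply]

theorem vecMulVec_self_mul_self [Fintype m] [CommSemiring R] (a : m → R) :
    vecMulVec a a * vecMulVec a a = (a ⬝ᵥ a) • vecMulVec a a := by
  rw [vecMulVec_mul_vecMulVec, vecMulVec_smul]

theorem transpose_smul_mul_smul [Fintype m] [CommSemiring R] (c : R) (X : Matrix m n R) :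
    (c • X)ᵀ * (c • X) = c ^ 2 • (Xᵀ * X) := by
  rw [transpose_smul, Matrix.smul_mul, Matrix.mul_smul, smul_smul, sq]

theorem sum_smul_transpose_sub_mul_sub [Fintype ι] [Fintype m] [CommRing R] {p : ι → R}
    (hp : ∑ j, p j = 1) {X : ι → Matrix m m R} {S : Matrix m m R} (hX : ∑ j, p j • X j = S) :
    ∑ j, p j • ((S - X j)ᵀ * (S - X j)) = ∑ j, p j • ((X j)ᵀ * X j) - Sᵀ * S := by
  have hexpand : ∀ j, p j • ((S - X j)ᵀ * (S - X j)) = p j • ((X j)ᵀ * X j)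
      - (p j • X j)ᵀ * S - Sᵀ * (p j • X j) + p j • (Sᵀ * S) := fun j => by
    simp only [transpose_sub, sub_mul, mul_sub, transpose_smul, smul_mul_assoc, mul_smul_comm,
      smul_sub]
    abel
  simp only [hexpand, Finset.sum_add_distrib, Finset.sum_sub_distrib, ← transpose_sum,
    ← Finset.sum_mul, ← Finset.mul_sum, ← Finset.sum_smul, hX, hp, one_smul]
  abel

section GramEstimator

variable [Field K] (p : ι → K) (A : Matrix ι m K)

def gramEstimator (j : ι) : Matrix m m K :=
  (p j)⁻¹ • vecMulVec (A j) (A j)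

variable {p A}

theorem sum_smul_gramEstimator [Fintype ι] (hA : ∀ j, p j = 0 → A j = 0) :
    ∑ j, p j • gramEstimator p A j = Aᵀ * A := by
  rw [transpose_mul_eq_sum_vecMulVec]
  refine Finset.sum_congr rfl fun j _ => ?_
  rcases eq_or_ne (p j) 0 with hj | hj
  · simp [hj, hA j hj]
  · rw [gramEstimator, smul_smul, mul_inv_cancel₀ hj, one_smul]

theorem smul_transpose_gramEstimator_mul_self [Fintype m] (j : ι) :
    p j • ((gramEstimator p A j)ᵀ * gramEstimator p A j)
      = (A j ⬝ᵥ A j / p j) • vecMulVec (A j) (A j) := by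
  rw [gramEstimator, transpose_smul_mul_smul, transpose_vecMulVec, vecMulVec_self_mul_self,
    smul_smul, smul_smul]
  congr 1
  rcases eq_or_ne (p j) 0 with hj | hj
  · simp [hj]
  · field_simp

theorem sum_smul_transpose_sub_gramEstimator_mul_sub [Fintype ι] [Fintype m]
    (hp : ∑ j, p j = 1) (hA : ∀ j, p j = 0 → A j = 0) :
    ∑ j, p j • ((Aᵀ * A - gramEstimator p A j)ᵀ * (Aᵀ * A - gramEstimator p A j))
      = ∑ j, (A j ⬝ᵥ A j / p j) • vecMulVec (A j) (A j) - (Aᵀ * A) * (Aᵀ * A) := by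
  rw [sum_smul_transpose_sub_mul_sub hp (sum_smul_gramEstimator hA), transpose_mul,
    transpose_transpose]
  simp only [smul_transpose_gramEstimator_mul_self]

end GramEstimator

theorem dotProduct_self_nonneg [Fintype m] [CommRing R] [LinearOrder R] [IsStrictOrderedRing R]
    (v : m → R) : 0 ≤ v ⬝ᵥ v :=
  Finset.sum_nonneg fun i _ => mul_self_nonneg (v i)

theorem transpose_mul_self_nonneg [Fintype m] [Fintype n] (X : Matrix m n ℝ) : 0 ≤ Xᵀ * X := by
  simpa only [conjTranspose_eq_transpose_of_trivial] using
    (posSemidef_conjTranspose_mul_self X).nonneg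

theorem sum_smul_transpose_mul_self_nonneg [Fintype ι] [Fintype m] {p : ι → ℝ}
    (hp : ∀ j, 0 ≤ p j) (W : ι → Matrix m m ℝ) : 0 ≤ ∑ j, p j • ((W j)ᵀ * W j) :=
  Finset.sum_nonneg fun j _ => smul_nonneg (hp j) (transpose_mul_self_nonneg (W j))

theorem sum_smul_vecMulVec_self_le [Fintype ι] [Fintype m] {A : Matrix ι m ℝ} {c : ι → ℝ}
    {C : ℝ} (hc : ∀ j, c j ≤ C) : ∑ j, c j • vecMulVec (A j) (A j) ≤ C • (Aᵀ * A) := by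
  rw [le_iff, transpose_mul_eq_sum_vecMulVec, Finset.smul_sum, ← Finset.sum_sub_distrib]
  refine posSemidef_sum _ fun j _ => ?_
  rw [← sub_smul]
  simpa using (posSemidef_vecMulVec_self_star (A j)).smul (sub_nonneg.2 (hc j))

end Matrix

theorem le_mul_sum_of_div_sum_le {ι : Type*} [Fintype ι] {r : ι → ℝ} (hr : ∀ j, 0 ≤ r j)
    {j : ι} {c : ℝ} (h : r j / ∑ j', r j' ≤ c) : r j ≤ c * ∑ j', r j' := by
  have hle : r j ≤ ∑ j', r j' := Finset.single_le_sum (fun j' _ => hr j') (Finset.mem_univ j)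
  rcases ((hr j).trans hle).eq_or_lt with hsum | hsum
  · simpa [← hsum] using hle
  · exact (div_le_iff₀ hsum).1 h

theorem minibatch_variance_term_bound_general
    (n d : ℕ) (A : Matrix (Fin n) (Fin d) ℝ) (p : Fin n → ℝ) (η B : ℝ)
    (hp0 : ∀ j, 0 ≤ p j) (hp1 : ∑ j, p j = 1) (hη : 1 ≤ η)
    (hprob : ∀ j, η * p j ≥ (∑ i, (A j i) ^ 2) / (∑ j', ∑ i, (A j' i) ^ 2))
    (W : Fin n → Matrix (Fin d) (Fin d) ℝ)
    (hW : ∀ j, W j = B⁻¹ •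
      (-((p j)⁻¹ • Matrix.vecMulVec (fun i => A j i) (fun i => A j i)) + Aᵀ * A)) :
    (∑ j, p j • ((W j)ᵀ * W j) =
      (B ^ 2)⁻¹ •
        ((∑ i, ((∑ i', (A i i') ^ 2) / p i) •
            Matrix.vecMulVec (fun i' => A i i') (fun i' => A i i'))
          - (Aᵀ * A) * (Aᵀ * A))) ∧
    ‖∑ j, p j • ((W j)ᵀ * W j)‖ ≤ η * (∑ j', ∑ i, (A j' i) ^ 2) * ‖A‖ ^ 2 / B ^ 2 := by
  have hsq : ∀ j, ∑ i, A j i ^ 2 = A j ⬝ᵥ A j := fun j => by simp only [dotProduct, sq]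
  simp only [hsq] at hprob ⊢
  set F := ∑ j, A j ⬝ᵥ A j
  have hηF : 0 ≤ η * F := mul_nonneg (by linarith) (Finset.sum_nonneg fun j _ =>
    dotProduct_self_nonneg (A j))
  have hrow_le : ∀ j, A j ⬝ᵥ A j ≤ η * p j * F := fun j =>
    le_mul_sum_of_div_sum_le (fun j => dotProduct_self_nonneg (A j)) (hprob j)
  have hrow : ∀ j, p j = 0 → A j = 0 := fun j hj =>
    dotProduct_self_eq_zero.1 <| le_antisymm (by simpa [hj] using hrow_le j)
      (dotProduct_self_nonneg _)
  have hWj : ∀ j, W j = B⁻¹ • (Aᵀ * A - gramEstimator p A j) := fun j =>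
    (hW j).trans (by rw [neg_add_eq_sub]; rfl)
  have hE : ∑ j, p j • ((W j)ᵀ * W j) = (B ^ 2)⁻¹ •
      (∑ j, (A j ⬝ᵥ A j / p j) • vecMulVec (A j) (A j) - (Aᵀ * A) * (Aᵀ * A)) := by
    simp only [hWj, transpose_smul_mul_smul, smul_comm (p _), ← Finset.smul_sum, inv_pow,
      sum_smul_transpose_sub_gramEstimator_mul_sub hp1 hrow]
  refine ⟨hE, ?_⟩
  have hgram_sq : 0 ≤ (Aᵀ * A) * (Aᵀ * A) := by
    simpa only [transpose_mul, transpose_transpose] using transpose_mul_self_nonneg (Aᵀ * A)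
  have hcoef : ∀ j, A j ⬝ᵥ A j / p j ≤ η * F := fun j =>
    div_le_of_le_mul₀ (hp0 j) hηF (by linarith [hrow_le j])
  have hle : ∑ j, p j • ((W j)ᵀ * W j) ≤ (B ^ 2)⁻¹ • ((η * F) • (Aᵀ * A)) :=
    hE ▸ smul_le_smul_of_nonneg_left
      ((sub_le_self _ hgram_sq).trans (sum_smul_vecMulVec_self_le hcoef)) (by positivity)
  calc ‖∑ j, p j • ((W j)ᵀ * W j)‖ ≤ ‖(B ^ 2)⁻¹ • ((η * F) • (Aᵀ * A))‖ :=
        l2_opNorm_le_of_nonneg_of_le (sum_smul_transpose_mul_self_nonneg hp0 W) hle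
    _ = η * F * ‖A‖ ^ 2 / B ^ 2 := by
      rw [norm_smul, norm_smul, l2_opNorm_transpose_mul_self, Real.norm_of_nonneg (by positivity),
        Real.norm_of_nonneg hηF]
      ring

theorem minibatch_variance_term_bound
    (n d : ℕ) (A : Matrix (Fin n) (Fin d) ℝ) (p : Fin n → ℝ) (η B : ℝ)
    (hp0 : ∀ j, 0 ≤ p j) (hp1 : ∑ j, p j = 1) (hη : 1 ≤ η) (hB : 0 < B)
    (hprob : ∀ j, η * p j ≥ (∑ i, (A j i) ^ 2) / (∑ j', ∑ i, (A j' i) ^ 2))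
    (W : Fin n → Matrix (Fin d) (Fin d) ℝ)
    (hW : ∀ j, W j = B⁻¹ •
      (-((p j)⁻¹ • Matrix.vecMulVec (fun i => A j i) (fun i => A j i)) + Aᵀ * A)) :
    (∑ j, p j • ((W j)ᵀ * W j) =
      (B ^ 2)⁻¹ •
        ((∑ i, ((∑ i', (A i i') ^ 2) / p i) •
            Matrix.vecMulVec (fun i' => A i i') (fun i' => A i i'))
          - (Aᵀ * A) * (Aᵀ * A))) ∧
    ‖∑ j, p j • ((W j)ᵀ * W j)‖ ≤ η * (∑ j', ∑ i, (A j' i) ^ 2) * ‖A‖ ^ 2 / B ^ 2 :=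
  minibatch_variance_term_bound_general n d A p η B hp0 hp1 hη hprob W hW
end

section
/- Let 0 < ℓ ≤ L, α = 1/L, β = (√(L/ℓ)-1)/(√(L/ℓ)+1), and λ ∈ [ℓ, L]. The eigenvalues z^± = (1/2)((1+β)(1-αλ) ± sqrt((1+β)²(1-αλ)² - 4β(1-αλ))) of T = [[(1+β)(1-αλ), -β(1-αλ)],[1,0]] satisfy |z^±| = √(β(1-αλ)) ≤ √(β(1-αℓ)) = 1 - 1/√(L/ℓ). -/
open Complex Polynomial

/-!
The block `T` is the companion matrix of `X² - t X + d` with `t = (1 + β)(1 - αλ)` and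
`d = β(1 - αλ)`. The choice of `β` makes the discriminant vanish exactly at `λ = ℓ`:
`(1 + β)²(1 - αℓ) = 4β`. Hence `t² ≤ 4d` on `[ℓ, L]`, the roots `t/2 ± i√(4d - t²)/2` are
complex conjugate with `|z|² = t²/4 + (4d - t²)/4 = d`, and `d` is monotone in `λ`.
-/

theorem Matrix.charpoly_map_ofReal_companion_fin_two (a b : ℝ) :
    ((!![a, -b; 1, 0] : Matrix (Fin 2) (Fin 2) ℝ).map ofReal).charpoly =
      X ^ 2 - C (a : ℂ) * X + C (b : ℂ) := by
  simp [Matrix.charpoly_fin_two, Matrix.trace_fin_two, Matrix.det_fin_two]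

namespace Complex

variable {t d : ℝ} {z : ℂ}

theorem isRoot_of_re_of_im_sq (hre : z.re = t / 2) (him : z.im ^ 2 = d - t ^ 2 / 4) :
    (X ^ 2 - C (t : ℂ) * X + C (d : ℂ)).IsRoot z := by
  simp only [IsRoot, eval_add, eval_sub, eval_mul, eval_pow, eval_C, eval_X]
  apply Complex.ext <;> simp [sq, hre] <;> nlinarith

theorem norm_eq_sqrt_of_re_of_im_sq (hre : z.re = t / 2) (him : z.im ^ 2 = d - t ^ 2 / 4) :
    ‖z‖ = √d := by
  rw [norm_def, normSq_apply, hre]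
  congr 1
  linear_combination him

theorem re_and_im_sq_of_eq_quadratic_formula (hdisc : t ^ 2 ≤ 4 * d)
    (hz : z = (t : ℂ) / 2 + (√(4 * d - t ^ 2) : ℂ) * I / 2 ∨
      z = (t : ℂ) / 2 - (√(4 * d - t ^ 2) : ℂ) * I / 2) :
    z.re = t / 2 ∧ z.im ^ 2 = d - t ^ 2 / 4 := by
  have hr := Real.sq_sqrt (sub_nonneg.mpr hdisc)
  rcases hz with rfl | rfl <;> constructor <;> simp <;> linear_combination hr / 4

end Complex

theorem nesterov_momentum_identities {s : ℝ} (hs : 0 < s) :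
    (1 + (s - 1) / (s + 1)) ^ 2 * (1 - 1 / s ^ 2) = 4 * ((s - 1) / (s + 1)) ∧
    (s - 1) / (s + 1) * (1 - 1 / s ^ 2) = (1 - 1 / s) ^ 2 := by
  have : s + 1 ≠ 0 := by positivity
  constructor <;> field_simp <;> ring

theorem sq_mul_le_four_mul_of_le_critical {β c c₀ : ℝ} (hc : 0 ≤ c) (hcc₀ : c ≤ c₀)
    (hcrit : (1 + β) ^ 2 * c₀ = 4 * β) : ((1 + β) * c) ^ 2 ≤ 4 * (β * c) := by
  calc ((1 + β) * c) ^ 2 = c * ((1 + β) ^ 2 * c) := by ring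
    _ ≤ c * ((1 + β) ^ 2 * c₀) := by gcongr
    _ = 4 * (β * c) := by rw [hcrit]; ring

theorem nag_block_eig_modulus
    (L ℓ α β lam : ℝ) (hℓ : 0 < ℓ) (hℓL : ℓ ≤ L)
    (hα : α = 1 / L)
    (hβ : β = (Real.sqrt (L / ℓ) - 1) / (Real.sqrt (L / ℓ) + 1))
    (hlam1 : ℓ ≤ lam) (hlam2 : lam ≤ L)
    (T : Matrix (Fin 2) (Fin 2) ℝ)
    (hT : T = !![(1 + β) * (1 - α * lam), -(β * (1 - α * lam)); 1, 0])
    (zp zm : ℂ)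
    (hzp : zp = (((1 + β) * (1 - α * lam) : ℝ) : ℂ) / 2 +
      ((Real.sqrt (4 * β * (1 - α * lam) - (1 + β) ^ 2 * (1 - α * lam) ^ 2) : ℝ) : ℂ)
        * Complex.I / 2)
    (hzm : zm = (((1 + β) * (1 - α * lam) : ℝ) : ℂ) / 2 -
      ((Real.sqrt (4 * β * (1 - α * lam) - (1 + β) ^ 2 * (1 - α * lam) ^ 2) : ℝ) : ℂ)
        * Complex.I / 2) :
    (T.map (Complex.ofReal)).charpoly.IsRoot zp ∧
    (T.map (Complex.ofReal)).charpoly.IsRoot zm ∧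
    ‖zp‖ = Real.sqrt (β * (1 - α * lam)) ∧
    ‖zm‖ = Real.sqrt (β * (1 - α * lam)) ∧
    Real.sqrt (β * (1 - α * lam)) ≤ Real.sqrt (β * (1 - α * ℓ)) ∧
    Real.sqrt (β * (1 - α * ℓ)) = 1 - 1 / Real.sqrt (L / ℓ) := by
  have hL : 0 < L := hℓ.trans_le hℓL
  set s := √(L / ℓ)
  have hs : 1 ≤ s := Real.one_le_sqrt.mpr ((one_le_div hℓ).mpr hℓL)
  have hαℓ : α * ℓ = 1 / s ^ 2 := by
    rw [hα, Real.sq_sqrt (by positivity)]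
    field_simp
  obtain ⟨hcrit, hrate⟩ := nesterov_momentum_identities (by linarith : 0 < s)
  rw [← hβ, ← hαℓ] at hcrit hrate
  have hβ0 : 0 ≤ β := hβ ▸ div_nonneg (by linarith) (by linarith)
  have hc0 : 0 ≤ 1 - α * lam := by
    rw [hα, one_div_mul_eq_div, sub_nonneg]
    exact (div_le_one hL).mpr hlam2
  have hcle : 1 - α * lam ≤ 1 - α * ℓ := by
    have : 0 ≤ α := hα ▸ by positivity
    nlinarith
  have hdisc := sq_mul_le_four_mul_of_le_critical hc0 hcle hcrit
  have hr : 4 * β * (1 - α * lam) - (1 + β) ^ 2 * (1 - α * lam) ^ 2 =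
      4 * (β * (1 - α * lam)) - ((1 + β) * (1 - α * lam)) ^ 2 := by ring
  rw [hr] at hzp hzm
  set t := (1 + β) * (1 - α * lam)
  set d := β * (1 - α * lam)
  obtain ⟨hpre, hpim⟩ := Complex.re_and_im_sq_of_eq_quadratic_formula hdisc (.inl hzp)
  obtain ⟨hmre, hmim⟩ := Complex.re_and_im_sq_of_eq_quadratic_formula hdisc (.inr hzm)
  have hs_inv : 1 / s ≤ 1 := div_le_one_of_le₀ hs (by linarith)
  rw [hT, Matrix.charpoly_map_ofReal_companion_fin_two]
  exact ⟨Complex.isRoot_of_re_of_im_sq hpre hpim, Complex.isRoot_of_re_of_im_sq hmre hmim,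
    Complex.norm_eq_sqrt_of_re_of_im_sq hpre hpim, Complex.norm_eq_sqrt_of_re_of_im_sq hmre hmim,
    Real.sqrt_le_sqrt (mul_le_mul_of_nonneg_left hcle hβ0),
    by rw [hrate, Real.sqrt_sq (by linarith)]⟩
end
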